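/- arXiv:2311.03862 — 4 statements merged into one kernel-verified Lean document; each statement's English description precedes it below -/
import Mathlib

section
/- Let A be an ordered semiring, Q a commutative integral quantale, and f : A → Q a subadditive morphism (where Q is viewed as an ordered semiring with addition given by binary join, zero the bottom element, and the quantale multiplication and unit). Then there exists a unique quantale homomorphism g from the quantale of ideals of A to Q — i.e., a unique map g satisfying g(⟨⋃_λ I_λ⟩) = ⨆_λ g(I_λ) for every set-indexed family of ideals (I_λ), g(I·J) = g(I)·g(J) for all ideals I, J, and g(A) = 1 — such that g(⟨x⟩) = f(x) for all x ∈ A. Moreover g is given by g(I) = ⨆_{x∈I} f(x). -/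
universe u v

section Defs

variable {A : Type u} [CommSemiring A] [Preorder A]

/-- The set `⟨S⟩ = {z | ∃ m, ∃ s₁,…,s_m ∈ S, ∃ y₁,…,y_m, z ≤ s₁y₁ + ⋯ + s_m y_m}`,
the smallest ideal of the ordered semiring `A` containing `S`. -/
def span (S : Set A) : Set A :=
  {z : A | ∃ (m : ℕ) (s y : Fin m → A), (∀ i, s i ∈ S) ∧ z ≤ ∑ i, s i * y i}

/-- `I` is an ideal of the ordered semiring `A`: downward closed, contains `0`,
closed under addition, and absorbing under multiplication. -/
def IsIdeal (I : Set A) : Prop :=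
  (∀ ⦃x y : A⦄, x ≤ y → y ∈ I → x ∈ I) ∧ (0 : A) ∈ I ∧
    (∀ ⦃x y : A⦄, x ∈ I → y ∈ I → x + y ∈ I) ∧
    ∀ x y : A, x ∈ I ∨ y ∈ I → x * y ∈ I

/-- The product `I · J` of two ideals: the ideal generated by `{x * y | x ∈ I, y ∈ J}`. -/
def iprod (I J : Set A) : Set A := span (Set.image2 (· * ·) I J)

/-- The radical `√I = {x | ∃ n ≥ 1, x ^ n ∈ I}` of an ideal `I`. -/
def radical (I : Set A) : Set A := {x : A | ∃ n : ℕ, 1 ≤ n ∧ x ^ n ∈ I}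

/-- `I` is a radical ideal of the ordered semiring `A`. -/
def IsRadicalIdeal (I : Set A) : Prop :=
  IsIdeal I ∧ ∀ (x : A) (n : ℕ), 1 ≤ n → x ^ n ∈ I → x ∈ I

/-- `I` is a prime ideal of the ordered semiring `A`. -/
def IsPrimeIdeal (I : Set A) : Prop :=
  IsIdeal I ∧ (1 : A) ∉ I ∧ ∀ x y : A, x * y ∈ I → x ∈ I ∨ y ∈ I

/-- `I` is a maximal ideal of the ordered semiring `A`. -/
def IsMaximalIdeal (I : Set A) : Prop :=
  IsIdeal I ∧ I ≠ Set.univ ∧ ∀ J : Set A, IsIdeal J → I ⊆ J → J = I ∨ J = Set.univ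

end Defs

set_option linter.unusedSectionVars false

section AuxLemmas

variable {A : Type u} [CommSemiring A] [Preorder A]
    [CovariantClass A A (· + ·) (· ≤ ·)] [CovariantClass A A (· * ·) (· ≤ ·)]

lemma aux_subset_span (S : Set A) : S ⊆ span S := fun x hx =>
  ⟨1, fun _ => x, fun _ => 1, fun _ => hx, by simp⟩

lemma aux_span_isIdeal (S : Set A) : IsIdeal (span S) := by
  refine ⟨?_, ?_, ?_, ?_⟩
  · rintro x y hxy ⟨m, s, t, hs, hy⟩
    exact ⟨m, s, t, hs, hxy.trans hy⟩
  · exact ⟨0, (fun i => i.elim0), (fun i => i.elim0), fun i => i.elim0, by simp⟩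
  · rintro x y ⟨m, s, t, hs, hx⟩ ⟨n, s', t', hs', hy⟩
    refine ⟨m + n, Fin.append s s', Fin.append t t', ?_, ?_⟩
    · intro i
      refine Fin.addCases (fun j => ?_) (fun j => ?_) i
      · simpa using hs j
      · simpa using hs' j
    · rw [Fin.sum_univ_add]
      simpa using add_le_add hx hy
  · have key : ∀ x y : A, x ∈ span S → x * y ∈ span S := by
      rintro x y ⟨m, s, t, hs, hx⟩
      refine ⟨m, s, fun i => t i * y, hs, ?_⟩
      have h1 : y * x ≤ y * ∑ i, s i * t i := mul_le_mul_right hx y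
      calc x * y = y * x := mul_comm _ _
        _ ≤ y * ∑ i, s i * t i := h1
        _ = ∑ i, s i * (t i * y) := by
            rw [Finset.mul_sum]; exact Finset.sum_congr rfl fun i _ => by ring
    rintro x y (hx | hy)
    · exact key x y hx
    · rw [mul_comm]; exact key y x hy

lemma aux_sum_mem {I : Set A} (hI : IsIdeal I) {m : ℕ} {t : Fin m → A}
    (ht : ∀ i, t i ∈ I) : (∑ i, t i) ∈ I := by
  induction m with
  | zero => simpa using hI.2.1
  | succ n ih =>
      rw [Fin.sum_univ_succ]
      exact hI.2.2.1 (ht 0) (ih fun i => ht i.succ)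

lemma aux_span_le {S I : Set A} (hI : IsIdeal I) (hSI : S ⊆ I) : span S ⊆ I := by
  rintro z ⟨m, s, t, hs, hz⟩
  exact hI.1 hz (aux_sum_mem hI fun i => hI.2.2.2 _ _ (Or.inl (hSI (hs i))))

lemma aux_span_eq {I : Set A} (hI : IsIdeal I) : span I = I :=
  Set.Subset.antisymm (aux_span_le hI Set.Subset.rfl) (aux_subset_span I)

end AuxLemmas

section QAux

variable {Q : Type v} [CompleteLattice Q] [CommMonoid Q]

lemma aux_mul_iSup (hQdist : ∀ (x : Q) (s : Set Q), x * sSup s = ⨆ y ∈ s, x * y)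
    (x : Q) {ι : Sort*} (h : ι → Q) : x * (⨆ i, h i) = ⨆ i, x * h i := by
  rw [iSup, hQdist, iSup_range]

lemma aux_mul_le_left (hQdist : ∀ (x : Q) (s : Set Q), x * sSup s = ⨆ y ∈ s, x * y)
    (hQint : (1 : Q) = ⊤) (a b : Q) : a * b ≤ a := by
  have h1 : sSup {b, 1} = (1 : Q) := by
    rw [hQint]; exact le_antisymm le_top (le_sSup (by simp))
  have := hQdist a {b, 1}
  rw [h1, mul_one] at this
  calc a * b ≤ ⨆ y ∈ ({b, 1} : Set Q), a * y := le_biSup _ (by simp)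
    _ = a := this.symm

end QAux

/-- universal property of the quantale of ideals: every subadditive
morphism `f : A → Q` into a commutative integral quantale factors uniquely through
`x ↦ ⟨x⟩` via a quantale homomorphism `g`, and `g I = ⨆_{x ∈ I} f x`. -/
theorem stmt7 {A : Type u} [CommSemiring A] [Preorder A]
    [CovariantClass A A (· + ·) (· ≤ ·)] [CovariantClass A A (· * ·) (· ≤ ·)]
    {Q : Type v} [CompleteLattice Q] [CommMonoid Q]
    (hQdist : ∀ (x : Q) (s : Set Q), x * sSup s = ⨆ y ∈ s, x * y)
    (hQint : (1 : Q) = ⊤)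
    (f : A → Q) (hf_mono : Monotone f) (hf0 : f 0 ≤ ⊥) (hf1 : f 1 = 1)
    (hf_add : ∀ x y : A, f (x + y) ≤ f x ⊔ f y)
    (hf_mul : ∀ x y : A, f (x * y) = f x * f y) :
    ∃ g : Set A → Q,
      ((∀ (ι : Type u) (I : ι → Set A), (∀ l, IsIdeal (I l)) →
            g (span (⋃ l, I l)) = ⨆ l, g (I l)) ∧
          (∀ I J : Set A, IsIdeal I → IsIdeal J → g (iprod I J) = g I * g J) ∧
          g Set.univ = 1 ∧
          ∀ x : A, g (span {x}) = f x) ∧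
        (∀ I : Set A, IsIdeal I → g I = ⨆ x ∈ I, f x) ∧
        ∀ g' : Set A → Q,
          ((∀ (ι : Type u) (I : ι → Set A), (∀ l, IsIdeal (I l)) →
              g' (span (⋃ l, I l)) = ⨆ l, g' (I l)) ∧
            (∀ I J : Set A, IsIdeal I → IsIdeal J → g' (iprod I J) = g' I * g' J) ∧
            g' Set.univ = 1 ∧
            ∀ x : A, g' (span {x}) = f x) →
          ∀ I : Set A, IsIdeal I → g' I = g I := by
  -- multiplication in `Q` distributes over arbitrary suprema and is monotone
  have hdist2 : ∀ (a : Q) (s : Set A) (h : A → Q),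
      a * (⨆ x ∈ s, h x) = ⨆ x ∈ s, a * h x := by
    intro a s h
    simp_rw [aux_mul_iSup hQdist]
  -- `f` of a finite sum is below any common upper bound of the terms
  have hsum : ∀ (m : ℕ) (t : Fin m → A) (c : Q), (∀ i, f (t i) ≤ c) →
      f (∑ i, t i) ≤ c := by
    intro m
    induction m with
    | zero => intro t c _; simpa using hf0.trans bot_le
    | succ n ih =>
        intro t c ht
        rw [Fin.sum_univ_succ]
        exact (hf_add _ _).trans (sup_le (ht 0) (ih _ _ fun i => ht i.succ))
  -- the supremum of `f` over `span S` equals its supremum over `S`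
  have hspan : ∀ S : Set A, (⨆ z ∈ span S, f z) = ⨆ x ∈ S, f x := by
    intro S
    refine le_antisymm (iSup₂_le ?_) (iSup₂_le fun x hx => le_biSup _ (aux_subset_span S hx))
    rintro z ⟨m, s, t, hs, hz⟩
    refine (hf_mono hz).trans (hsum _ _ _ fun i => ?_)
    rw [hf_mul]
    exact (aux_mul_le_left hQdist hQint _ _).trans (le_biSup _ (hs i))
  refine ⟨fun I => ⨆ x ∈ I, f x, ⟨?_, ?_, ?_, ?_⟩, fun I _ => rfl, ?_⟩
  · -- joins
    intro ι I hI
    beta_reduce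
    rw [hspan, iSup_iUnion]
  · -- products
    intro I J hI hJ
    beta_reduce
    rw [iprod, hspan, iSup_image2]
    have : (⨆ x ∈ I, f x) * (⨆ y ∈ J, f y) = ⨆ x ∈ I, ⨆ y ∈ J, f x * f y := by
      rw [mul_comm, hdist2]
      exact iSup_congr fun x => iSup_congr fun hx => by rw [mul_comm, hdist2]
    rw [this]
    exact iSup_congr fun x => iSup_congr fun hx =>
      iSup_congr fun y => iSup_congr fun hy => hf_mul x y
  · -- the unit
    beta_reduce
    refine le_antisymm ?_ ?_
    · rw [hQint]; exact le_top
    · rw [← hf1]; exact le_biSup f (Set.mem_univ 1)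
  · -- compatibility with `f`
    intro x
    beta_reduce
    rw [hspan]
    simp
  · -- uniqueness
    rintro g' ⟨hjoin, -, -, hsingle⟩ I hI
    have hIeq : span (⋃ l : I, span {(l : A)}) = I := by
      refine Set.Subset.antisymm (aux_span_le hI ?_) ?_
      · exact Set.iUnion_subset fun l =>
          aux_span_le hI (by simp [l.2])
      · intro x hx
        exact aux_subset_span _ (Set.mem_iUnion.2 ⟨⟨x, hx⟩, aux_subset_span _ rfl⟩)
    have := hjoin I (fun l => span {(l : A)}) (fun l => aux_span_isIdeal _)
    rw [hIeq] at this
    rw [this]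
    simp only [hsingle]
    exact (iSup_subtype'' I f).trans rfl
end

section
/- Let A be an ordered semiring. The radical ideals of A, ordered by inclusion, form a frame: (i) the intersection of any family of radical ideals is a radical ideal (so meets are intersections and the join of a family (J_λ) of radical ideals is √⟨⋃_λ J_λ⟩); and (ii) the frame distributive law holds: for every radical ideal I and every set-indexed family (J_λ) of radical ideals, I ∩ √⟨⋃_λ J_λ⟩ = √⟨⋃_λ (I ∩ J_λ)⟩. -/
universe u v

/-- the radical ideals of `A` form a frame: (i) arbitrary intersections
of radical ideals are radical ideals (so meets are intersections and the join of a
family is `√⟨⋃_λ J_λ⟩`); (ii) the frame distributive law (helpers) -/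
lemma sum_mem_of_ideal {A : Type u} [CommSemiring A] [Preorder A] {I : Set A}
    (hI : IsIdeal I) {m : ℕ} (s y : Fin m → A) (hs : ∀ i, s i ∈ I) :
    ∑ i, s i * y i ∈ I :=
  Finset.sum_induction _ (· ∈ I) (fun _ _ ha hb => hI.2.2.1 ha hb) hI.2.1
    (fun i _ => hI.2.2.2 _ _ (Or.inl (hs i)))

lemma span_subset_of_ideal {A : Type u} [CommSemiring A] [Preorder A] {I S : Set A}
    (hI : IsIdeal I) (hS : S ⊆ I) : span S ⊆ I := by
  rintro z ⟨m, s, y, hs, hz⟩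
  exact hI.1 hz (sum_mem_of_ideal hI s y fun i => hS (hs i))

lemma span_mono {A : Type u} [CommSemiring A] [Preorder A] {S T : Set A}
    (h : S ⊆ T) : span S ⊆ span T := by
  rintro z ⟨m, s, y, hs, hz⟩
  exact ⟨m, s, y, fun i => h (hs i), hz⟩

lemma radical_mono {A : Type u} [CommSemiring A] [Preorder A] {S T : Set A}
    (h : S ⊆ T) : radical S ⊆ radical T := by
  rintro x ⟨n, hn, hx⟩
  exact ⟨n, hn, h hx⟩

/-- the radical ideals of `A` form a frame: (i) arbitrary intersections
of radical ideals are radical ideals (so meets are intersections and the join of a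
family is `√⟨⋃_λ J_λ⟩`); (ii) the frame distributive law
`I ∩ √⟨⋃_λ J_λ⟩ = √⟨⋃_λ (I ∩ J_λ)⟩` holds. -/
theorem stmt10 {A : Type u} [CommSemiring A] [Preorder A]
    [CovariantClass A A (· + ·) (· ≤ ·)] [CovariantClass A A (· * ·) (· ≤ ·)] :
    (∀ (ι : Type u) (J : ι → Set A), (∀ l, IsRadicalIdeal (J l)) →
        IsRadicalIdeal (⋂ l, J l)) ∧
      ∀ I : Set A, IsRadicalIdeal I →
        ∀ (ι : Type u) (J : ι → Set A), (∀ l, IsRadicalIdeal (J l)) →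
          I ∩ radical (span (⋃ l, J l)) = radical (span (⋃ l, I ∩ J l)) := by
  constructor
  · intro ι J hJ
    refine ⟨⟨?_, ?_, ?_, ?_⟩, ?_⟩
    · intro x y hxy hy
      exact Set.mem_iInter.2 fun l => (hJ l).1.1 hxy (Set.mem_iInter.1 hy l)
    · exact Set.mem_iInter.2 fun l => (hJ l).1.2.1
    · intro x y hx hy
      exact Set.mem_iInter.2 fun l =>
        (hJ l).1.2.2.1 (Set.mem_iInter.1 hx l) (Set.mem_iInter.1 hy l)
    · rintro x y (hx | hy)
      · exact Set.mem_iInter.2 fun l => (hJ l).1.2.2.2 x y (Or.inl (Set.mem_iInter.1 hx l))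
      · exact Set.mem_iInter.2 fun l => (hJ l).1.2.2.2 x y (Or.inr (Set.mem_iInter.1 hy l))
    · intro x n hn hx
      exact Set.mem_iInter.2 fun l => (hJ l).2 x n hn (Set.mem_iInter.1 hx l)
  · intro I hI ι J hJ
    apply Set.Subset.antisymm
    · rintro x ⟨hxI, n, hn, m, s, y, hs, hle⟩
      refine ⟨n + 1, le_trans hn (Nat.le_succ n), m, fun i => x * s i, y, ?_, ?_⟩
      · intro i
        obtain ⟨_, ⟨l, rfl⟩, hsl⟩ := hs i
        exact Set.mem_iUnion.2 ⟨l, hI.1.2.2.2 x (s i) (Or.inl hxI),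
          (hJ l).1.2.2.2 x (s i) (Or.inr hsl)⟩
      · calc x ^ (n + 1) = x * x ^ n := by rw [pow_succ']
          _ ≤ x * ∑ i, s i * y i := mul_le_mul_right hle x
          _ = ∑ i, (x * s i) * y i := by
              rw [Finset.mul_sum]
              exact Finset.sum_congr rfl fun i _ => (mul_assoc _ _ _).symm
    · intro x hx
      constructor
      · obtain ⟨n, hn, hxn⟩ := hx
        refine hI.2 x n hn (span_subset_of_ideal hI.1 ?_ hxn)
        exact Set.iUnion_subset fun l => Set.inter_subset_left
      · exact radical_mono (span_mono (Set.iUnion_mono fun l => Set.inter_subset_right)) hx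
end

section
/- Let A and B be ordered semirings such that 0 ≤ x holds for every x ∈ A, and such that in B addition is the binary join for the order of B (i.e., b ≤ b + c and c ≤ b + c for all b, c ∈ B, and b ≤ d and c ≤ d imply b + c ≤ d). Then every subadditive morphism f : A → B is a homomorphism: f(0) = 0 and f(x + y) = f(x) + f(y) for all x, y ∈ A. -/
universe u v

/-- if `0 ≤ x` for all `x ∈ A` and in `B` addition is the binary join
for the order (with `0` the bottom element), then every subadditive morphism
`f : A → B` is a homomorphism. -/
theorem stmt12 {A : Type u} [CommSemiring A] [Preorder A]
    [CovariantClass A A (· + ·) (· ≤ ·)] [CovariantClass A A (· * ·) (· ≤ ·)]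
    {B : Type v} [CommSemiring B] [PartialOrder B]
    [CovariantClass B B (· + ·) (· ≤ ·)] [CovariantClass B B (· * ·) (· ≤ ·)]
    (hA0 : ∀ x : A, 0 ≤ x)
    (hB0 : ∀ b : B, 0 ≤ b)
    (hBle₁ : ∀ b c : B, b ≤ b + c) (hBle₂ : ∀ b c : B, c ≤ b + c)
    (hBlub : ∀ b c d : B, b ≤ d → c ≤ d → b + c ≤ d)
    (f : A → B) (hf_mono : Monotone f) (hf0 : f 0 ≤ 0) (hf1 : f 1 = 1)
    (hf_add : ∀ x y : A, f (x + y) ≤ f x + f y)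
    (hf_mul : ∀ x y : A, f (x * y) = f x * f y) :
    f 0 = 0 ∧ ∀ x y : A, f (x + y) = f x + f y := by
  refine ⟨le_antisymm hf0 (hB0 _), fun x y => le_antisymm (hf_add x y) ?_⟩
  refine hBlub _ _ _ (hf_mono ?_) (hf_mono ?_)
  · calc x = x + 0 := (add_zero x).symm
      _ ≤ x + y := add_le_add_right (hA0 y) x
  · calc y = 0 + y := (zero_add y).symm
      _ ≤ x + y := add_le_add_left (hA0 x) y
end

section
/- Every maximal ideal of an ordered semiring is a prime ideal. -/
universe u v

/-- every maximal ideal of an ordered semiring is a prime ideal. -/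
theorem stmt14 {A : Type u} [CommSemiring A] [Preorder A]
    [CovariantClass A A (· + ·) (· ≤ ·)] [CovariantClass A A (· * ·) (· ≤ ·)]
    (I : Set A) (hI : IsMaximalIdeal I) : IsPrimeIdeal I := by
  obtain ⟨⟨hdown, hzero, hadd, hmul⟩, hne, hmax⟩ := hI
  have hone : (1 : A) ∉ I := by
    intro h1
    apply hne
    ext z
    simp only [Set.mem_univ, iff_true]
    have := hmul z 1 (Or.inr h1)
    rwa [mul_one] at this
  refine ⟨⟨hdown, hzero, hadd, hmul⟩, hone, ?_⟩
  intro x y hxy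
  by_cases hx : x ∈ I
  · exact Or.inl hx
  right
  set J : Set A := {z | ∃ a b : A, a ∈ I ∧ z ≤ a + x * b} with hJ
  have hJideal : IsIdeal J := by
    refine ⟨?_, ?_, ?_, ?_⟩
    · rintro u v huv ⟨a, b, ha, hv⟩
      exact ⟨a, b, ha, le_trans huv hv⟩
    · exact ⟨0, 0, hzero, by simp⟩
    · rintro u v ⟨a, b, ha, hu⟩ ⟨a', b', ha', hv⟩
      refine ⟨a + a', b + b', hadd ha ha', ?_⟩
      calc u + v ≤ (a + x * b) + (a' + x * b') := add_le_add hu hv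
        _ = a + a' + x * (b + b') := by ring
    · rintro u v (⟨a, b, ha, hu⟩ | ⟨a, b, ha, hv⟩)
      · refine ⟨a * v, b * v, hmul a v (Or.inl ha), ?_⟩
        calc u * v ≤ (a + x * b) * v := mul_le_mul_left hu v
          _ = a * v + x * (b * v) := by ring
      · refine ⟨u * a, u * b, hmul u a (Or.inr ha), ?_⟩
        calc u * v ≤ u * (a + x * b) := mul_le_mul_right hv u
          _ = u * a + x * (u * b) := by ring
  have hIJ : I ⊆ J := fun a ha => ⟨a, 0, ha, by simp⟩
  have hxJ : x ∈ J := ⟨0, 1, hzero, by simp⟩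
  rcases hmax J hJideal hIJ with hJI | hJuniv
  · exact absurd (hJI ▸ hxJ) hx
  have h1J : (1 : A) ∈ J := hJuniv ▸ Set.mem_univ 1
  obtain ⟨a, b, ha, h1⟩ := h1J
  have hymem : y * a + (x * y) * b ∈ I :=
    hadd (hmul y a (Or.inr ha)) (hmul (x * y) b (Or.inl hxy))
  refine hdown ?_ hymem
  calc y = y * 1 := by ring
    _ ≤ y * (a + x * b) := mul_le_mul_right h1 y
    _ = y * a + (x * y) * b := by ring
end
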